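/- Fix σ ∈ ℂ and M0 ∈ ℂ, and data matrices H_n(U), H_n(Y) as above. Then the inclusion Σ_{U,Y} ⊆ Σ^0_{σ,M0} holds if and only if there exists ξ ∈ ℂ^{T−n+1} such that H_n(U) ξ = γ_n(σ) and H_n(Y) ξ = M0 γ_n(σ), where γ_n(σ) = (1, σ, σ², …, σ^n)ᵀ ∈ ℂ^{n+1}. -/

import Mathlib

open Matrix

/-- Hankel matrix of depth `n` built from data `W = (w_0, …, w_T)`. -/
def hankel (n T : ℕ) (h : n ≤ T) (W : Fin (T + 1) → ℝ) :
    Matrix (Fin (n + 1)) (Fin (T - n + 1)) ℝ :=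
  Matrix.of fun i j => W ⟨i.1 + j.1, by omega⟩

/-- The order-`n` system with parameters `[q  -p]` explains the data `(U, Y)`. -/
def Explains (n T : ℕ) (h : n ≤ T) (U Y : Fin (T + 1) → ℝ)
    (q : Fin (n + 1) → ℝ) (p : Fin n → ℝ) : Prop :=
  ∀ j : Fin (T - n + 1),
    ∑ i : Fin (n + 1), q i * U ⟨i.1 + j.1, by omega⟩
      - ∑ i : Fin n, p i * Y ⟨i.1 + j.1, by omega⟩ = Y ⟨n + j.1, by omega⟩

/-!
Stack the data into `C = [H_n(U); H_n(Y)]` and the target into `d = [γ_n(σ); M0 γ_n(σ)]`.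
A pair `(q, p)` explains the data iff the row `[q  -p  -1]` lies in the left kernel of `C`,
and `Q(σ) - M0 P(σ)` is that row applied to `d`. The left-hand side thus says that `d` is
annihilated by the left-kernel vectors with last coordinate `-1`. As the true system provides
one such vector, they span the left kernel, so `d` is annihilated by the whole left kernel,
i.e. `d` lies in the column space of `C` over `ℂ`.
-/

namespace Matrix

variable {ι κ : Type*} [Fintype κ]

theorem exists_mulVec_eq_and_mulVec_eq_iff {ι' R : Type*} [Semiring R]
    (A : Matrix ι κ R) (B : Matrix ι' κ R) (a : ι → R) (b : ι' → R) :
    (∃ ξ, A *ᵥ ξ = a ∧ B *ᵥ ξ = b) ↔ ∃ ξ, fromRows A B *ᵥ ξ = Sum.elim a b := by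
  simp only [fromRows_mulVec, funext_iff, Sum.forall, Sum.elim_inl, Sum.elim_inr]

variable [Fintype ι]

theorem exists_mulVec_eq_iff_forall_vecMul_eq_zero {K : Type*} [Field K] [DecidableEq ι]
    (A : Matrix ι κ K) (d : ι → K) :
    (∃ ξ, A *ᵥ ξ = d) ↔ ∀ w, w ᵥ* A = 0 → w ⬝ᵥ d = 0 := by
  refine ⟨fun ⟨ξ, hξ⟩ w hw => by rw [← hξ, dotProduct_mulVec, hw, zero_dotProduct], fun h => ?_⟩
  suffices d ∈ LinearMap.range A.mulVecLin from this
  rw [← Subspace.dualAnnihilator_dualCoannihilator_eq (W := LinearMap.range A.mulVecLin),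
    Submodule.mem_dualCoannihilator]
  intro φ hφ
  obtain ⟨w, rfl⟩ := (dotProductEquiv K ι).surjective φ
  refine h w (dotProduct_eq_zero _ fun ξ => ?_)
  rw [← dotProduct_mulVec]
  exact (Submodule.mem_dualAnnihilator _).1 hφ _ ⟨ξ, rfl⟩

theorem exists_map_ofReal_mulVec_eq_iff (C : Matrix ι κ ℝ) (d : ι → ℂ) :
    (∃ ξ, C.map Complex.ofReal *ᵥ ξ = d) ↔
      ∀ w ∈ LinearMap.ker C.vecMulLinear, Fintype.linearCombination ℝ d w = 0 := by
  classical
  rw [exists_mulVec_eq_iff_forall_vecMul_eq_zero]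
  simp only [LinearMap.mem_ker, vecMulLinear_apply, Fintype.linearCombination_apply,
    Complex.real_smul]
  constructor
  · intro h w hw
    refine h _ ?_
    ext j
    change ((Complex.ofRealHom ∘ w) ᵥ* C.map Complex.ofRealHom) j = 0
    rw [← RingHom.map_vecMul, hw, Pi.zero_apply, map_zero]
  · intro h w hw
    have hre : (fun i => (w i).re) ᵥ* C = 0 := by
      ext j
      simpa [vecMul, dotProduct] using congrArg Complex.re (congrFun hw j)
    have him : (fun i => (w i).im) ᵥ* C = 0 := by
      ext j
      simpa [vecMul, dotProduct] using congrArg Complex.im (congrFun hw j)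
    calc w ⬝ᵥ d = ∑ i, ((w i).re : ℂ) * d i + Complex.I * ∑ i, ((w i).im : ℂ) * d i := by
          simp only [dotProduct, Finset.mul_sum, ← Finset.sum_add_distrib]
          refine Finset.sum_congr rfl fun i _ => ?_
          conv_lhs => rw [← Complex.re_add_im (w i)]
          ring
      _ = 0 := by rw [h _ hre, h _ him, mul_zero, add_zero]

end Matrix

theorem Submodule.apply_eq_zero_of_apply_eq_zero_on_fiber {K V W : Type*} [Field K]
    [AddCommGroup V] [Module K V] [AddCommGroup W] [Module K W] {S : Submodule K V}
    {φ : V →ₗ[K] K} {f : V →ₗ[K] W} {c : K} (hc : c ≠ 0) {w₀ : V} (hw₀ : w₀ ∈ S)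
    (hφw₀ : φ w₀ = c) (h : ∀ w ∈ S, φ w = c → f w = 0) {w : V} (hw : w ∈ S) : f w = 0 := by
  have hfw₀ : f w₀ = 0 := h w₀ hw₀ hφw₀
  -- shift `w` into the fiber `φ = c` along `w₀`
  have hmem : w₀ + w - (φ w / c) • w₀ ∈ S := S.sub_mem (S.add_mem hw₀ hw) (S.smul_mem _ hw₀)
  have hfiber : φ (w₀ + w - (φ w / c) • w₀) = c := by
    rw [map_sub, map_add, map_smul, hφw₀, smul_eq_mul, div_mul_cancel₀ _ hc, add_sub_cancel_right]
  simpa [hfw₀] using h _ hmem hfiber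

def systemRow {n : ℕ} (q : Fin (n + 1) → ℝ) (p : Fin n → ℝ) : Fin (n + 1) ⊕ Fin (n + 1) → ℝ :=
  Sum.elim q (Fin.snoc (-p) (-1))

theorem systemRow_eq_of_apply_last {n : ℕ} {w : Fin (n + 1) ⊕ Fin (n + 1) → ℝ}
    (hw : w (Sum.inr (Fin.last n)) = -1) :
    systemRow (w ∘ Sum.inl) (fun i => -w (Sum.inr i.castSucc)) = w := by
  ext (i | i)
  · rfl
  · induction i using Fin.lastCases <;> simp [systemRow, hw]

theorem explains_iff_systemRow_vecMul (n T : ℕ) (hT : n ≤ T) (U Y : Fin (T + 1) → ℝ)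
    (q : Fin (n + 1) → ℝ) (p : Fin n → ℝ) :
    Explains n T hT U Y q p ↔
      systemRow q p ᵥ* fromRows (hankel n T hT U) (hankel n T hT Y) = 0 := by
  simp only [Explains, funext_iff, vecMul_fromRows, Pi.add_apply, Pi.zero_apply]
  refine forall_congr' fun j => ?_
  simp only [vecMul, dotProduct, systemRow, hankel, of_apply, Function.comp_apply, Sum.elim_inl,
    Sum.elim_inr, Fin.sum_univ_castSucc (n := n), Fin.snoc_castSucc, Fin.snoc_last,
    Fin.val_castSucc, Fin.val_last, Pi.neg_apply, neg_mul, one_mul, Finset.sum_neg_distrib]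
  constructor <;> intro h <;> linear_combination h

theorem linearCombination_systemRow {n : ℕ} (σ M0 : ℂ) (q : Fin (n + 1) → ℝ) (p : Fin n → ℝ) :
    Fintype.linearCombination ℝ
        (Sum.elim (fun i : Fin (n + 1) => σ ^ (i : ℕ)) fun i : Fin (n + 1) => M0 * σ ^ (i : ℕ))
        (systemRow q p) =
      ∑ i : Fin (n + 1), (q i : ℂ) * σ ^ (i : ℕ)
        - M0 * (σ ^ n + ∑ i : Fin n, (p i : ℂ) * σ ^ (i : ℕ)) := by
  simp only [Fintype.linearCombination_apply, Fintype.sum_sum_type, systemRow, Sum.elim_inl,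
    Sum.elim_inr, Fin.sum_univ_castSucc (n := n), Fin.snoc_castSucc, Fin.snoc_last,
    Fin.val_castSucc, Fin.val_last, Complex.real_smul, Pi.neg_apply, Complex.ofReal_neg,
    Complex.ofReal_one]
  rw [mul_add, Finset.mul_sum]
  simp only [neg_mul, one_mul, Finset.sum_neg_distrib, mul_left_comm M0]
  ring

theorem stmt_5 (n T : ℕ) (hT : n ≤ T) (U Y : Fin (T + 1) → ℝ) (σ M0 : ℂ)
    (hne : ∃ (q : Fin (n + 1) → ℝ) (p : Fin n → ℝ), Explains n T hT U Y q p) :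
    (∀ (q : Fin (n + 1) → ℝ) (p : Fin n → ℝ), Explains n T hT U Y q p →
        ∑ i : Fin (n + 1), (q i : ℂ) * σ ^ (i : ℕ)
          = M0 * (σ ^ n + ∑ i : Fin n, (p i : ℂ) * σ ^ (i : ℕ))) ↔
      ∃ ξ : Fin (T - n + 1) → ℂ,
        ((hankel n T hT U).map (Complex.ofReal : ℝ → ℂ)) *ᵥ ξ
            = (fun i : Fin (n + 1) => σ ^ (i : ℕ)) ∧
        ((hankel n T hT Y).map (Complex.ofReal : ℝ → ℂ)) *ᵥ ξ
            = (fun i : Fin (n + 1) => M0 * σ ^ (i : ℕ)) := by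
  obtain ⟨q₀, p₀, h₀⟩ := hne
  rw [exists_mulVec_eq_and_mulVec_eq_iff, ← fromRows_map, exists_map_ofReal_mulVec_eq_iff]
  constructor
  · intro h w hw
    refine Submodule.apply_eq_zero_of_apply_eq_zero_on_fiber
      (φ := LinearMap.proj (Sum.inr (Fin.last n))) (c := -1) (by norm_num)
      ((explains_iff_systemRow_vecMul ..).1 h₀) (by simp [systemRow]) ?_ hw
    intro w hw hlast
    rw [← systemRow_eq_of_apply_last hlast] at hw ⊢
    rw [linearCombination_systemRow, sub_eq_zero]
    exact h _ _ ((explains_iff_systemRow_vecMul ..).2 hw)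
  · intro h q p hqp
    rw [← sub_eq_zero, ← linearCombination_systemRow]
    exact h _ ((explains_iff_systemRow_vecMul ..).1 hqp)
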